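/- Let d ≥ 2 and n = d + 2, and fix (α, λ) ∈ ℂ^{d−1} × ℂ and j ∈ {0,…,n−1}. If y₁ and y₂ are two nonzero solutions of the Schrödinger equation with parameters (α, λ), both subdominant in the Stokes sector S_j, then they are linearly dependent: there exists a nonzero constant c ∈ ℂ with y₂ = c·y₁. -/

import Mathlib

/-!
Let `w = exp(2πij/n)` be the central direction of `S_j`. Since `w^(d+2) = 1`, a solution `y`
restricts to `u(r) = y(r w)` with `u'' = q u`, where `q(r) = w² (P_α(r w) - λ) = r^d + O(r^(d-1))`
has nonnegative real part for large `r`. Then `G = Re(ū u')` is eventually nondecreasing, and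
`G > 0` at some point would make `|u|²` (whose derivative is `2G`) grow linearly, so `u → 0` forces
`G ≤ 0`. For two subdominant solutions, `G₁ + G₂ ≤ 0` has derivative at least `|u₁'|² + |u₂'|²`,
so both derivatives are bounded by `1` at arbitrarily large `r`; there the Wronskian, which is
constant, is arbitrarily small, hence zero. Finally, a vanishing Wronskian makes `y₂ / y₁` locally
constant near a point where `y₁ ≠ 0`, and the identity theorem gives `y₂ = c y₁` on all of `ℂ`.
-/

open Complex Filter Topology

/-- The polynomial potential `P_α(z) = z^d + α_{d-1} z^{d-1} + ⋯ + α₁ z`. -/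
noncomputable def Pol (d : ℕ) (α : Fin (d - 1) → ℂ) (z : ℂ) : ℂ :=
  z ^ d + ∑ i : Fin (d - 1), α i * z ^ ((i : ℕ) + 1)

/-- `y` is an (entire) solution of the Schrödinger equation `y'' = (P_α - λ) y`. -/
def IsSol (d : ℕ) (α : Fin (d - 1) → ℂ) (lam : ℂ) (y : ℂ → ℂ) : Prop :=
  Differentiable ℂ y ∧ ∀ z : ℂ, deriv (deriv y) z = (Pol d α z - lam) * y z

/-- `θ` is a ray direction of the Stokes sector `S_j`. -/
def DirIn (n j : ℕ) (θ : ℝ) : Prop :=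
  |θ - 2 * Real.pi * j / n| < Real.pi / n

/-- `y` is subdominant in the Stokes sector `S_j`: it tends to `0` along every ray in `S_j`. -/
def Subdominant (n j : ℕ) (y : ℂ → ℂ) : Prop :=
  ∀ θ : ℝ, DirIn n j θ →
    Tendsto (fun r : ℝ => y ((r : ℂ) * Complex.exp (θ * Complex.I))) atTop (𝓝 0)

open ComplexConjugate

noncomputable def wronskian (f g : ℂ → ℂ) (z : ℂ) : ℂ :=
  f z * deriv g z - g z * deriv f z

section Wronskian

variable {Q f g : ℂ → ℂ}

theorem hasDerivAt_wronskian (hf : Differentiable ℂ f) (hg : Differentiable ℂ g)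
    (hf'' : ∀ z, deriv (deriv f) z = Q z * f z) (hg'' : ∀ z, deriv (deriv g) z = Q z * g z)
    (z : ℂ) : HasDerivAt (wronskian f g) 0 z := by
  have h := ((hf z).hasDerivAt.mul (hg.deriv z).hasDerivAt).sub
    ((hg z).hasDerivAt.mul (hf.deriv z).hasDerivAt)
  refine h.congr_deriv ?_
  rw [hf'', hg'']
  ring

theorem wronskian_apply_eq (hf : Differentiable ℂ f) (hg : Differentiable ℂ g)
    (hf'' : ∀ z, deriv (deriv f) z = Q z * f z) (hg'' : ∀ z, deriv (deriv g) z = Q z * g z)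
    (z z' : ℂ) : wronskian f g z = wronskian f g z' :=
  is_const_of_deriv_eq_zero
    (fun z => (hasDerivAt_wronskian hf hg hf'' hg'' z).differentiableAt)
    (fun z => (hasDerivAt_wronskian hf hg hf'' hg'' z).deriv) z z'

theorem exists_eq_const_mul_of_wronskian_eq_zero (hf : Differentiable ℂ f)
    (hg : Differentiable ℂ g) (hW : wronskian f g = 0) (hf0 : f ≠ 0) :
    ∃ c : ℂ, g = fun z => c * f z := by
  obtain ⟨z₀, hz₀⟩ := Function.ne_iff.1 hf0
  obtain ⟨ε, hε, hball⟩ :=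
    Metric.isOpen_iff.1 (isOpen_ne_fun hf.continuous continuous_const) z₀ hz₀
  have hquot : ∀ z ∈ Metric.ball z₀ ε, HasDerivAt (fun z => g z / f z) 0 z := by
    intro z hz
    refine ((hg z).hasDerivAt.div (hf z).hasDerivAt (hball hz)).congr_deriv ?_
    have hWz : f z * deriv g z - g z * deriv f z = 0 := congrFun hW z
    rw [div_eq_zero_iff]
    left
    linear_combination hWz
  obtain ⟨c, hc⟩ := Metric.isOpen_ball.exists_is_const_of_deriv_eq_zero
    (convex_ball z₀ ε).isPreconnected
    (fun z hz => (hquot z hz).differentiableAt.differentiableWithinAt)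
    (fun z hz => (hquot z hz).deriv)
  refine ⟨c, AnalyticOnNhd.eq_of_eventuallyEq (fun z _ => hg.analyticAt z)
    (fun z _ => (hf.const_mul c).analyticAt z) (z₀ := z₀) ?_⟩
  filter_upwards [Metric.ball_mem_nhds z₀ hε] with z hz
  rw [← hc z hz, div_mul_cancel₀ _ (hball hz)]

end Wronskian

section Growth

variable {f f' : ℝ → ℝ} {R a : ℝ}

theorem mul_sub_le_sub_of_le_hasDerivAt (hf : ∀ r ≥ R, HasDerivAt f (f' r) r)
    (hf' : ∀ r ≥ R, a ≤ f' r) {x y : ℝ} (hx : R ≤ x) (hxy : x ≤ y) :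
    a * (y - x) ≤ f y - f x := by
  refine (convex_Ici R).mul_sub_le_image_sub_of_le_deriv
    (fun r hr => (hf r hr).continuousAt.continuousWithinAt) (fun r hr => ?_) (fun r hr => ?_)
    x hx y (hx.trans hxy) hxy
  · rw [interior_Ici] at hr
    exact (hf r hr.le).differentiableAt.differentiableWithinAt
  · rw [interior_Ici] at hr
    rw [(hf r hr.le).deriv]
    exact hf' r hr.le

theorem tendsto_atTop_of_le_hasDerivAt (ha : 0 < a)
    (hf : ∀ᶠ r in atTop, HasDerivAt f (f' r) r) (hf' : ∀ᶠ r in atTop, a ≤ f' r) :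
    Tendsto f atTop atTop := by
  obtain ⟨R, hR⟩ := eventually_atTop.1 (hf.and hf')
  have hlin : Tendsto (fun r => f R + a * (r - R)) atTop atTop :=
    tendsto_atTop_add_const_left _ _
      ((tendsto_id.atTop_add tendsto_const_nhds).const_mul_atTop ha)
  refine tendsto_atTop_mono' atTop ?_ hlin
  filter_upwards [eventually_ge_atTop R] with r hr
  have := mul_sub_le_sub_of_le_hasDerivAt (fun r hr => (hR r hr).1) (fun r hr => (hR r hr).2)
    le_rfl hr
  linarith

end Growth

theorem HasDerivAt.re {u : ℝ → ℂ} {u' : ℂ} {r : ℝ} (hu : HasDerivAt u u' r) :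
    HasDerivAt (fun s => (u s).re) u'.re r :=
  reCLM.hasFDerivAt.comp_hasDerivAt r hu

section Ray

variable {u du v dv q : ℝ → ℂ}

theorem HasDerivAt.re_conj_mul {u' du' : ℂ} {r : ℝ} (hu : HasDerivAt u u' r)
    (hdu : HasDerivAt du du' r) :
    HasDerivAt (fun s => (conj (u s) * du s).re) (conj u' * du r + conj (u r) * du').re r :=
  (hu.star.mul hdu).re

theorem HasDerivAt.normSq {u' : ℂ} {r : ℝ} (hu : HasDerivAt u u' r) :
    HasDerivAt (fun s => normSq (u s)) (2 * (conj (u r) * u').re) r := by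
  have h := hu.re_conj_mul hu
  simp only [← normSq_eq_conj_mul_self, ofReal_re] at h
  refine h.congr_deriv ?_
  simp only [add_re, mul_re, conj_re, conj_im]
  ring

theorem hasDerivAt_re_conj_mul_of_hasDerivAt_mul {r : ℝ} (hu : HasDerivAt u (du r) r)
    (hdu : HasDerivAt du (q r * u r) r) :
    HasDerivAt (fun s => (conj (u s) * du s).re) (normSq (du r) + (q r).re * normSq (u r)) r :=
  (hu.re_conj_mul hdu).congr_deriv (by
    simp only [add_re, mul_re, mul_im, conj_re, conj_im, normSq_apply]; ring)

theorem eventually_re_conj_mul_nonpos (hu : ∀ r, HasDerivAt u (du r) r)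
    (hdu : ∀ r, HasDerivAt du (q r * u r) r) (hq : ∀ᶠ r in atTop, 0 ≤ (q r).re)
    (hlim : Tendsto u atTop (𝓝 0)) :
    ∀ᶠ r in atTop, (conj (u r) * du r).re ≤ 0 := by
  obtain ⟨R, hR⟩ := eventually_atTop.1 hq
  have hG_mono : ∀ r ≥ R, ∀ s ≥ r,
      (conj (u r) * du r).re ≤ (conj (u s) * du s).re := fun r hr s hs => by
    have := mul_sub_le_sub_of_le_hasDerivAt
      (fun t _ => hasDerivAt_re_conj_mul_of_hasDerivAt_mul (hu t) (hdu t))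
      (fun t ht => add_nonneg (normSq_nonneg _) (mul_nonneg (hR t ht) (normSq_nonneg _))) hr hs
    linarith
  filter_upwards [eventually_ge_atTop R] with r hr
  by_contra! hpos
  have hφ : Tendsto (fun s => normSq (u s)) atTop atTop :=
    tendsto_atTop_of_le_hasDerivAt (mul_pos two_pos hpos)
      (Eventually.of_forall fun s => (hu s).normSq)
      (by filter_upwards [eventually_ge_atTop r] with s hs; linarith [hG_mono r hr s hs])
  have hφ0 : Tendsto (fun s => normSq (u s)) atTop (𝓝 0) :=
    (continuous_normSq.tendsto' 0 0 (map_zero normSq)).comp hlim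
  exact not_tendsto_atTop_of_tendsto_nhds hφ0 hφ

theorem frequently_norm_le_one_and_norm_le_one (hu : ∀ r, HasDerivAt u (du r) r)
    (hdu : ∀ r, HasDerivAt du (q r * u r) r) (hv : ∀ r, HasDerivAt v (dv r) r)
    (hdv : ∀ r, HasDerivAt dv (q r * v r) r) (hq : ∀ᶠ r in atTop, 0 ≤ (q r).re)
    (hulim : Tendsto u atTop (𝓝 0)) (hvlim : Tendsto v atTop (𝓝 0)) :
    ∃ᶠ r in atTop, ‖du r‖ ≤ 1 ∧ ‖dv r‖ ≤ 1 := by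
  by_contra h
  rw [not_frequently] at h
  have hH : Tendsto (fun r => (conj (u r) * du r).re + (conj (v r) * dv r).re) atTop atTop := by
    refine tendsto_atTop_of_le_hasDerivAt one_pos (Eventually.of_forall fun r =>
      (hasDerivAt_re_conj_mul_of_hasDerivAt_mul (hu r) (hdu r)).add
        (hasDerivAt_re_conj_mul_of_hasDerivAt_mul (hv r) (hdv r))) ?_
    filter_upwards [h, hq] with r hr hqr
    have hsum : 1 ≤ normSq (du r) + normSq (dv r) := by
      rw [normSq_eq_norm_sq, normSq_eq_norm_sq]
      rcases le_or_gt ‖du r‖ 1 with h1 | h1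
      · nlinarith [not_le.1 (not_and.1 hr h1), sq_nonneg ‖du r‖]
      · nlinarith [sq_nonneg ‖dv r‖]
    nlinarith [mul_nonneg hqr (normSq_nonneg (u r)), mul_nonneg hqr (normSq_nonneg (v r))]
  obtain ⟨r, hpos, hGu, hGv⟩ := ((hH.eventually_gt_atTop 0).and
    ((eventually_re_conj_mul_nonpos hu hdu hq hulim).and
      (eventually_re_conj_mul_nonpos hv hdv hq hvlim))).exists
  linarith

end Ray

theorem exp_ofReal_two_pi_mul_div_mul_I_pow (j : ℕ) {n : ℕ} (hn : n ≠ 0) :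
    exp ((2 * Real.pi * j / n : ℝ) * I) ^ n = 1 := by
  rw [← exp_nat_mul, ← exp_nat_mul_two_pi_mul_I j]
  congr 1
  push_cast
  field_simp

section Potential

variable {d : ℕ} {α : Fin (d - 1) → ℂ} {lam w : ℂ}

theorem norm_sq_mul_pol_sub_sub_pow_le (hw : w ^ (d + 2) = 1) {r : ℝ} (hr : 1 ≤ r) :
    ‖w ^ 2 * (Pol d α (r * w) - lam) - (r : ℂ) ^ d‖ ≤ (∑ i, ‖α i‖) * r ^ (d - 1) + ‖lam‖ := by
  have hw1 : ‖w‖ = 1 := norm_eq_one_of_pow_eq_one hw (by omega)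
  have hterm : ∀ i : Fin (d - 1), ‖w ^ 2 * (α i * (r * w) ^ ((i : ℕ) + 1))‖ ≤ ‖α i‖ * r ^ (d - 1) :=
    fun i => by
      rw [norm_mul, norm_mul, norm_pow, norm_pow, norm_mul, hw1, norm_real, Real.norm_eq_abs,
        abs_of_nonneg (by linarith), one_pow, mul_one, one_mul]
      exact mul_le_mul_of_nonneg_left (pow_le_pow_right₀ hr (by omega)) (norm_nonneg _)
  calc ‖w ^ 2 * (Pol d α (r * w) - lam) - (r : ℂ) ^ d‖
      = ‖∑ i, w ^ 2 * (α i * (r * w) ^ ((i : ℕ) + 1)) - w ^ 2 * lam‖ := by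
        rw [Pol, ← Finset.mul_sum]
        congr 1
        linear_combination (r : ℂ) ^ d * hw
    _ ≤ ∑ i, ‖w ^ 2 * (α i * (r * w) ^ ((i : ℕ) + 1))‖ + ‖w ^ 2 * lam‖ :=
        (norm_sub_le _ _).trans (add_le_add_left (norm_sum_le _ _) _)
    _ ≤ (∑ i, ‖α i‖) * r ^ (d - 1) + ‖lam‖ := by
        rw [Finset.sum_mul, norm_mul, norm_pow, hw1, one_pow, one_mul]
        exact add_le_add_left (Finset.sum_le_sum fun i _ => hterm i) _

theorem eventually_re_sq_mul_pol_sub_nonneg (hd : 1 ≤ d) (hw : w ^ (d + 2) = 1) :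
    ∀ᶠ r : ℝ in atTop, 0 ≤ (w ^ 2 * (Pol d α (r * w) - lam)).re := by
  set S := ∑ i, ‖α i‖
  filter_upwards [eventually_ge_atTop (1 + S + ‖lam‖)] with r hr
  have hS : 0 ≤ S := Finset.sum_nonneg fun i _ => norm_nonneg _
  have hr1 : 1 ≤ r := by linarith [norm_nonneg lam]
  have hclose := (abs_re_le_norm _).trans
    (norm_sq_mul_pol_sub_sub_pow_le (α := α) (lam := lam) hw hr1)
  rw [sub_re, ← ofReal_pow, ofReal_re] at hclose
  have hpow : r ^ d = r ^ (d - 1) * r := by rw [← pow_succ, Nat.sub_add_cancel hd]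
  have hpow1 : 1 ≤ r ^ (d - 1) := one_le_pow₀ hr1
  nlinarith [abs_le.1 hclose, norm_nonneg lam]

end Potential

theorem hasDerivAt_comp_ofReal_mul {f : ℂ → ℂ} (hf : Differentiable ℂ f) (w : ℂ) (r : ℝ) :
    HasDerivAt (fun s : ℝ => f (s * w)) (w * deriv f (r * w)) r := by
  have h := (hf (r * w)).hasDerivAt.comp (r : ℂ) (hasDerivAt_mul_const w)
  exact h.comp_ofReal.congr_deriv (mul_comm _ _)

theorem wronskian_eq_zero_of_tendsto_zero_along_ray {Q f g : ℂ → ℂ} {w : ℂ}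
    (hf : Differentiable ℂ f) (hg : Differentiable ℂ g)
    (hf'' : ∀ z, deriv (deriv f) z = Q z * f z) (hg'' : ∀ z, deriv (deriv g) z = Q z * g z)
    (hw : w ≠ 0) (hQ : ∀ᶠ r : ℝ in atTop, 0 ≤ (w ^ 2 * Q (r * w)).re)
    (hflim : Tendsto (fun r : ℝ => f (r * w)) atTop (𝓝 0))
    (hglim : Tendsto (fun r : ℝ => g (r * w)) atTop (𝓝 0)) :
    wronskian f g = 0 := by
  have hray : ∀ {y : ℂ → ℂ}, Differentiable ℂ y → (∀ z, deriv (deriv y) z = Q z * y z) →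
      ∀ r : ℝ, HasDerivAt (fun s : ℝ => w * deriv y (s * w)) (w ^ 2 * Q (r * w) * y (r * w)) r :=
    fun hy hy'' r => ((hasDerivAt_comp_ofReal_mul hy.deriv w r).const_mul w).congr_deriv (by
      rw [hy'']; ring)
  have hfreq := frequently_norm_le_one_and_norm_le_one
    (hasDerivAt_comp_ofReal_mul hf w) (hray hf hf'') (hasDerivAt_comp_ofReal_mul hg w)
    (hray hg hg'') hQ hflim hglim
  set l := atTop ⊓ 𝓟 {r : ℝ | ‖w * deriv f (r * w)‖ ≤ 1 ∧ ‖w * deriv g (r * w)‖ ≤ 1}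
  have : l.NeBot := frequently_iff_neBot.1 hfreq
  have hWlim : Tendsto (fun r : ℝ => w * wronskian f g (r * w)) l (𝓝 0) := by
    have hl : ∀ᶠ r : ℝ in l, ‖w * deriv f (r * w)‖ ≤ 1 ∧ ‖w * deriv g (r * w)‖ ≤ 1 :=
      mem_inf_of_right (mem_principal_self _)
    have hf_dg := (hflim.mono_left inf_le_left).zero_mul_isBoundedUnder_le
      (isBoundedUnder_of_eventually_le (hl.mono fun _ h => h.2))
    have hg_df := (hglim.mono_left inf_le_left).zero_mul_isBoundedUnder_le
      (isBoundedUnder_of_eventually_le (hl.mono fun _ h => h.1))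
    have h := hf_dg.sub hg_df
    rw [sub_zero] at h
    refine h.congr fun r => ?_
    simp only [wronskian]
    ring
  ext z
  have hconst : (fun r : ℝ => w * wronskian f g (r * w)) = fun _ => w * wronskian f g z :=
    funext fun r => by rw [wronskian_apply_eq hf hg hf'' hg'' (r * w) z]
  rw [hconst, tendsto_const_nhds_iff] at hWlim
  exact (mul_eq_zero.1 hWlim).resolve_left hw

theorem stmt9_general (d : ℕ) (hd : 2 ≤ d) (n : ℕ) (hn : n = d + 2)
    (α : Fin (d - 1) → ℂ) (lam : ℂ) (j : ℕ)
    (y₁ y₂ : ℂ → ℂ) (hy₁ : IsSol d α lam y₁) (hy₂ : IsSol d α lam y₂)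
    (h₁0 : y₁ ≠ 0) (h₂0 : y₂ ≠ 0)
    (hs₁ : Subdominant n j y₁) (hs₂ : Subdominant n j y₂) :
    ∃ c : ℂ, c ≠ 0 ∧ y₂ = fun z => c * y₁ z := by
  subst hn
  set θ : ℝ := 2 * Real.pi * j / (d + 2 : ℕ)
  have hθ : DirIn (d + 2) j θ := by
    rw [DirIn, sub_self, abs_zero]
    positivity
  have hW : wronskian y₁ y₂ = 0 :=
    wronskian_eq_zero_of_tendsto_zero_along_ray hy₁.1 hy₂.1 hy₁.2 hy₂.2 (exp_ne_zero _)
      (eventually_re_sq_mul_pol_sub_nonneg (by omega)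
        (exp_ofReal_two_pi_mul_div_mul_I_pow j (by omega)))
      (hs₁ θ hθ) (hs₂ θ hθ)
  obtain ⟨c, hc⟩ := exists_eq_const_mul_of_wronskian_eq_zero hy₁.1 hy₂.1 hW h₁0
  refine ⟨c, ?_, hc⟩
  rintro rfl
  exact h₂0 (hc.trans (funext fun z => zero_mul (y₁ z)))

theorem stmt9 (d : ℕ) (hd : 2 ≤ d) (n : ℕ) (hn : n = d + 2)
    (α : Fin (d - 1) → ℂ) (lam : ℂ) (j : ℕ) (hj : j < n)
    (y₁ y₂ : ℂ → ℂ) (hy₁ : IsSol d α lam y₁) (hy₂ : IsSol d α lam y₂)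
    (h₁0 : y₁ ≠ 0) (h₂0 : y₂ ≠ 0)
    (hs₁ : Subdominant n j y₁) (hs₂ : Subdominant n j y₂) :
    ∃ c : ℂ, c ≠ 0 ∧ y₂ = fun z => c * y₁ z :=
  stmt9_general d hd n hn α lam j y₁ y₂ hy₁ hy₂ h₁0 h₂0 hs₁ hs₂
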